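/- arXiv:2503.24208 — 3 statements merged into one kernel-verified Lean document; each statement's English description precedes it below -/
import Mathlib

section
/- Let ω : ℝ³ × ℝ³ → ℝ^{3×3} be a smooth matrix-valued kernel satisfying the exchange symmetry ω(v,v') = ω(v',v), with each ω(v,v') a symmetric matrix satisfying ω(v,v')(v − v') = 0, and let f : ℝ³ → ℝ be smooth and compactly supported. Then the total kinetic energy is conserved by the collision operator: ∫_{ℝ³} |v|² · C_ω[f](v) dv = 0. -/
open MeasureTheory Matrix
open scoped RealInnerProductSpace ContDiff

noncomputable section

/-- ℝ³ as three-dimensional Euclidean space. -/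
abbrev E3 : Type := EuclideanSpace ℝ (Fin 3)

/-- A 3×3 matrix acting on a Euclidean vector. -/
def matVec (M : Matrix (Fin 3) (Fin 3) ℝ) (x : E3) : E3 :=
  (EuclideanSpace.equiv (Fin 3) ℝ).symm (M.mulVec (EuclideanSpace.equiv (Fin 3) ℝ x))

/-- Divergence of a vector field on ℝ³. -/
def div3 (F : E3 → E3) (v : E3) : ℝ :=
  ∑ i : Fin 3, fderiv ℝ F v (EuclideanSpace.single i 1) i

/-- The integrand Ω(v,v') (f(v') ∇f(v) − f(v) ∇f(v')) of the collision operator. -/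
def collKer (Ω : E3 → E3 → Matrix (Fin 3) (Fin 3) ℝ) (f : E3 → ℝ) (v v' : E3) : E3 :=
  matVec (Ω v v') (f v' • gradient f v - f v • gradient f v')

/-- The collision operator C_Ω[f](v) = div_v ∫ Ω(v,v')(f(v')∇f(v) − f(v)∇f(v')) dv'. -/
def collOp (Ω : E3 → E3 → Matrix (Fin 3) (Fin 3) ℝ) (f : E3 → ℝ) (v : E3) : ℝ :=
  div3 (fun w => ∫ v', collKer Ω f w v') v

/-!
The flux `G v = ∫ Ω(v,v') (f(v') ∇f(v) − f(v) ∇f(v')) dv'` is `C¹` with compact support, so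
integration by parts turns `∫ |v|² div G` into `−2 ∫∫ ⟪v, K(v,v')⟫ dv' dv`, where `K` is the
integrand of `G`. Exchange symmetry makes `K` antisymmetric, and the symmetric matrix `Ω(v,v')`
annihilates `v − v'`, so `⟪v − v', K(v,v')⟫ = 0`. Hence `⟪v, K(v,v')⟫` is antisymmetric in
`(v, v')`, and its double integral vanishes by Fubini.
-/

open Function Set Filter

section ParametricIntegral

variable {H Y E : Type*} [NormedAddCommGroup H] [NormedAddCommGroup Y] [NormedAddCommGroup E]
  {K : H → Y → E}

theorem apply_eq_zero_of_notMem_image_snd_tsupport {y : Y}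
    (hy : y ∉ Prod.snd '' tsupport (uncurry K)) (x : H) : K x y = 0 :=
  image_eq_zero_of_notMem_tsupport (f := uncurry K) (x := (x, y)) fun hxy => hy ⟨_, hxy, rfl⟩

theorem hasCompactSupport_integral [NormedSpace ℝ E] [MeasurableSpace Y] {μ : Measure Y}
    (hK : HasCompactSupport (uncurry K)) :
    HasCompactSupport (fun x => ∫ y, K x y ∂μ) := by
  refine HasCompactSupport.intro (hK.image continuous_fst) fun x hx => ?_
  have hzero : ∀ y, K x y = 0 := fun y =>
    image_eq_zero_of_notMem_tsupport (f := uncurry K) (x := (x, y)) fun hxy => hx ⟨_, hxy, rfl⟩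
  simp [hzero]

theorem integrable_of_hasCompactSupport_uncurry [MeasurableSpace Y] [OpensMeasurableSpace Y]
    {μ : Measure Y} [IsFiniteMeasureOnCompacts μ]
    (hK : Continuous (uncurry K)) (hK' : HasCompactSupport (uncurry K)) (x : H) :
    Integrable (K x) μ :=
  (hK.comp (Continuous.prodMk_right x)).integrable_of_hasCompactSupport <|
    HasCompactSupport.intro (hK'.image continuous_snd) fun _ hy =>
      apply_eq_zero_of_notMem_image_snd_tsupport hy x

theorem continuous_integral_of_hasCompactSupport [NormedSpace ℝ H] [FiniteDimensional ℝ H]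
    [NormedSpace ℝ E] [MeasurableSpace Y] [OpensMeasurableSpace Y]
    [SecondCountableTopologyEither Y E] {μ : Measure Y} [IsLocallyFiniteMeasure μ]
    (hK : Continuous (uncurry K)) (hK' : HasCompactSupport (uncurry K)) :
    Continuous (fun x => ∫ y, K x y ∂μ) := by
  have hset : (fun x => ∫ y, K x y ∂μ) =
      fun x => ∫ y in Prod.snd '' tsupport (uncurry K), K x y ∂μ :=
    funext fun x => (setIntegral_eq_integral_of_forall_compl_eq_zero fun y hy =>
      apply_eq_zero_of_notMem_image_snd_tsupport hy x).symm
  rw [hset]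
  exact continuous_parametric_integral_of_continuous hK (hK'.image continuous_snd)

variable [NormedSpace ℝ H] [NormedSpace ℝ Y] [NormedSpace ℝ E]
  [MeasurableSpace Y] [BorelSpace Y] {μ : Measure Y} [IsFiniteMeasureOnCompacts μ]

theorem hasFDerivAt_integral_of_hasCompactSupport [SecondCountableTopology Y]
    (hK : ContDiff ℝ 1 (uncurry K)) (hK' : HasCompactSupport (uncurry K)) (x₀ : H) :
    HasFDerivAt (fun x => ∫ y, K x y ∂μ)
      (∫ y, (fderiv ℝ (uncurry K) (x₀, y)).comp (.inl ℝ H Y) ∂μ) x₀ := by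
  set k := Prod.snd '' tsupport (uncurry K)
  have hk : IsCompact k := hK'.image continuous_snd
  have hDK : Continuous (fderiv ℝ (uncurry K)) := hK.continuous_fderiv one_ne_zero
  obtain ⟨M, hM⟩ := (hK'.fderiv (𝕜 := ℝ)).exists_bound_of_continuous hDK
  have hpartial : ∀ x y,
      HasFDerivAt (K · y) ((fderiv ℝ (uncurry K) (x, y)).comp (.inl ℝ H Y)) x :=
    fun x y => ((hK.differentiable one_ne_zero (x, y)).hasFDerivAt.comp x
      (hasFDerivAt_prodMk_left (𝕜 := ℝ) x y) :)
  refine hasFDerivAt_integral_of_dominated_of_fderiv_le (bound := k.indicator fun _ => M)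
    (F' := fun x y => (fderiv ℝ (uncurry K) (x, y)).comp (.inl ℝ H Y))
    univ_mem (Eventually.of_forall fun x => ?_) ?_ ?_ ?_ ?_ ?_
  · exact (hK.continuous.comp (Continuous.prodMk_right x)).aestronglyMeasurable
  · exact integrable_of_hasCompactSupport_uncurry hK.continuous hK' x₀
  · exact ((hDK.comp (Continuous.prodMk_right x₀)).clm_comp continuous_const).aestronglyMeasurable
  · refine Eventually.of_forall fun y x _ => ?_
    by_cases hy : y ∈ k
    · rw [indicator_of_mem hy]
      grw [ContinuousLinearMap.opNorm_comp_le, ContinuousLinearMap.norm_inl_le_one, mul_one]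
      exact hM (x, y)
    · rw [indicator_of_notMem hy]
      have hzero : fderiv ℝ (uncurry K) (x, y) = 0 := image_eq_zero_of_notMem_tsupport
        fun hxy => hy ⟨_, tsupport_fderiv_subset ℝ hxy, rfl⟩
      simp [hzero]
  · exact (integrable_indicator_iff hk.measurableSet).2 (integrableOn_const hk.measure_ne_top)
  · exact Eventually.of_forall fun y x _ => hpartial x y

theorem contDiff_one_integral_of_hasCompactSupport [FiniteDimensional ℝ H]
    [FiniteDimensional ℝ Y] (hK : ContDiff ℝ 1 (uncurry K))
    (hK' : HasCompactSupport (uncurry K)) :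
    ContDiff ℝ 1 (fun x => ∫ y, K x y ∂μ) := by
  have hderiv := hasFDerivAt_integral_of_hasCompactSupport (μ := μ) hK hK'
  refine contDiff_one_iff_fderiv.2 ⟨fun x => (hderiv x).differentiableAt, ?_⟩
  rw [funext fun x => (hderiv x).fderiv]
  exact continuous_integral_of_hasCompactSupport
    (K := fun x y => (fderiv ℝ (uncurry K) (x, y)).comp (.inl ℝ H Y))
    ((hK.continuous_fderiv one_ne_zero).clm_comp continuous_const)
    (hK'.fderiv (𝕜 := ℝ) |>.comp_left (g := fun A : H × Y →L[ℝ] E => A.comp (.inl ℝ H Y))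
      (ContinuousLinearMap.zero_comp _))

end ParametricIntegral

theorem integral_integral_eq_zero_of_antisymm {X : Type*} [TopologicalSpace X]
    [MeasurableSpace X] [OpensMeasurableSpace X] {μ : Measure X} [IsFiniteMeasureOnCompacts μ]
    {F : X → X → ℝ} (hF : Continuous (uncurry F)) (hF' : HasCompactSupport (uncurry F))
    (hanti : ∀ x y, F y x = -F x y) :
    ∫ x, ∫ y, F x y ∂μ ∂μ = 0 := by
  have hflip : ∀ y, ∫ x, F x y ∂μ = -∫ x, F y x ∂μ := fun y => by
    rw [← integral_neg]
    exact integral_congr_ae (Eventually.of_forall fun x => hanti y x)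
  have hswap := integral_integral_swap_of_hasCompactSupport hF hF' (μ := μ) (ν := μ)
  rw [funext hflip, integral_neg] at hswap
  linarith

theorem ContinuousLinearMap.apply_eq_sum_apply_single_mul {ι : Type*} [Fintype ι]
    [DecidableEq ι] (L : EuclideanSpace ℝ ι →L[ℝ] ℝ) (x : EuclideanSpace ℝ ι) :
    L x = ∑ i, L (EuclideanSpace.single i 1) * x i := by
  conv_lhs => rw [← (EuclideanSpace.basisFun ι ℝ).sum_repr x]
  simp [mul_comm]

theorem div3_eq_sum_fderiv_apply_single {G : E3 → E3} {v : E3} (hG : DifferentiableAt ℝ G v) :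
    div3 G v = ∑ i, fderiv ℝ (fun w => G w i) v (EuclideanSpace.single i 1) := by
  refine Finset.sum_congr rfl fun i _ => ?_
  have hcoord : HasFDerivAt (fun w => G w i)
      ((EuclideanSpace.proj i : E3 →L[ℝ] ℝ).comp (fderiv ℝ G v)) v :=
    (EuclideanSpace.proj i : E3 →L[ℝ] ℝ).hasFDerivAt.comp v hG.hasFDerivAt
  rw [hcoord.fderiv]
  rfl

theorem integral_mul_div3_eq_neg_integral_fderiv {φ : E3 → ℝ} {G : E3 → E3}
    (hφ : ContDiff ℝ 1 φ) (hG : ContDiff ℝ 1 G) (hG' : HasCompactSupport G) :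
    ∫ v, φ v * div3 G v = -∫ v, fderiv ℝ φ v (G v) := by
  set e : Fin 3 → E3 := fun i => EuclideanSpace.single i 1
  have hGi : ∀ i, ContDiff ℝ 1 (fun w => G w i) :=
    fun i => (EuclideanSpace.proj i : E3 →L[ℝ] ℝ).contDiff.comp hG
  have hGi' : ∀ i, HasCompactSupport (fun w => G w i) :=
    fun i => hG'.comp_left (g := fun x : E3 => x i) rfl
  have hint : ∀ i, Integrable fun v => fderiv ℝ φ v (e i) * G v i := fun i =>
    (((hφ.continuous_fderiv one_ne_zero).clm_apply continuous_const).mul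
      (hGi i).continuous).integrable_of_hasCompactSupport (hGi' i).mul_left
  have hint' : ∀ i, Integrable fun v => φ v * fderiv ℝ (fun w => G w i) v (e i) := fun i =>
    (hφ.continuous.mul (((hGi i).continuous_fderiv one_ne_zero).clm_apply continuous_const)
      ).integrable_of_hasCompactSupport ((hGi' i).fderiv_apply (𝕜 := ℝ) (e i)).mul_left
  have hparts : ∀ i, ∫ v, φ v * fderiv ℝ (fun w => G w i) v (e i) =
      -∫ v, fderiv ℝ φ v (e i) * G v i := fun i =>
    integral_mul_fderiv_eq_neg_fderiv_mul_of_integrable (hint i) (hint' i)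
      ((hφ.continuous.mul (hGi i).continuous).integrable_of_hasCompactSupport (hGi' i).mul_left)
      (fun x _ => hφ.differentiable one_ne_zero x)
      (fun x _ => (hGi i).differentiable one_ne_zero x)
  calc ∫ v, φ v * div3 G v
      = ∫ v, ∑ i, φ v * fderiv ℝ (fun w => G w i) v (e i) := by
        simp_rw [div3_eq_sum_fderiv_apply_single (hG.differentiable one_ne_zero _),
          Finset.mul_sum]
        rfl
    _ = ∑ i, -∫ v, fderiv ℝ φ v (e i) * G v i := by
        rw [integral_finsetSum _ fun i _ => hint' i]
        exact Finset.sum_congr rfl fun i _ => hparts i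
    _ = -∫ v, fderiv ℝ φ v (G v) := by
        simp_rw [ContinuousLinearMap.apply_eq_sum_apply_single_mul (fderiv ℝ φ _) (G _)]
        rw [integral_finsetSum _ fun i _ => hint i, Finset.sum_neg_distrib]

theorem matVec_eq_toEuclideanLin (M : Matrix (Fin 3) (Fin 3) ℝ) (x : E3) :
    matVec M x = Matrix.toEuclideanLin M x := rfl

theorem inner_matVec_eq_zero_of_isSymm {M : Matrix (Fin 3) (Fin 3) ℝ} (hM : M.IsSymm) {x : E3}
    (hx : matVec M x = 0) (y : E3) : ⟪x, matVec M y⟫ = 0 := by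
  rw [matVec_eq_toEuclideanLin, ← Matrix.isSymmetric_toEuclideanLin_iff.mpr hM x y,
    ← matVec_eq_toEuclideanLin, hx, inner_zero_left]

theorem ContDiff.matVec {X : Type*} [NormedAddCommGroup X] [NormedSpace ℝ X] {n : WithTop ℕ∞}
    {M : X → Matrix (Fin 3) (Fin 3) ℝ} {u : X → E3}
    (hM : ∀ i j, ContDiff ℝ n fun x => M x i j) (hu : ContDiff ℝ n u) :
    ContDiff ℝ n (fun x => matVec (M x) (u x)) := by
  refine (EuclideanSpace.equiv (Fin 3) ℝ).symm.contDiff.comp (contDiff_pi.2 fun i => ?_)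
  simp only [Matrix.mulVec, dotProduct]
  exact ContDiff.sum fun j _ =>
    (hM i j).mul ((EuclideanSpace.proj j : E3 →L[ℝ] ℝ).contDiff.comp hu)

section CollisionKernel

variable {Ω : E3 → E3 → Matrix (Fin 3) (Fin 3) ℝ} {f : E3 → ℝ}

theorem contDiff_collKer {n : WithTop ℕ∞}
    (hΩ : ∀ i j, ContDiff ℝ n fun p : E3 × E3 => Ω p.1 p.2 i j) (hf : ContDiff ℝ (n + 1) f) :
    ContDiff ℝ n (uncurry (collKer Ω f)) := by
  have hgrad : ContDiff ℝ n (gradient f) :=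
    (InnerProductSpace.toDual ℝ E3).symm.contDiff.comp (hf.fderiv_right le_rfl)
  exact ContDiff.matVec hΩ <|
    ((hf.of_le le_self_add).comp contDiff_snd).smul (hgrad.comp contDiff_fst) |>.sub <|
      ((hf.of_le le_self_add).comp contDiff_fst).smul (hgrad.comp contDiff_snd)

theorem collKer_eq_zero_of_notMem_tsupport {v v' : E3}
    (h : v ∉ tsupport f ∨ v' ∉ tsupport f) : collKer Ω f v v' = 0 := by
  have hgrad : ∀ w ∉ tsupport f, gradient f w = 0 := fun w hw => by
    simp [gradient, image_eq_zero_of_notMem_tsupport (f := fderiv ℝ f)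
      fun h => hw (tsupport_fderiv_subset ℝ h)]
  rcases h with h | h <;>
    simp [collKer, image_eq_zero_of_notMem_tsupport h, hgrad _ h, matVec_eq_toEuclideanLin]

theorem hasCompactSupport_collKer (hf : HasCompactSupport f) :
    HasCompactSupport (uncurry (collKer Ω f)) :=
  HasCompactSupport.intro (hf.prod hf) fun _ hp =>
    collKer_eq_zero_of_notMem_tsupport (not_and_or.1 hp)

theorem collKer_swap (hexch : ∀ v v', Ω v v' = Ω v' v) (v v' : E3) :
    collKer Ω f v' v = -collKer Ω f v v' := by
  simp only [collKer, matVec_eq_toEuclideanLin, hexch v' v, ← map_neg, neg_sub]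

theorem inner_collKer_swap (hexch : ∀ v v', Ω v v' = Ω v' v)
    (hsymm : ∀ v v', (Ω v v')ᵀ = Ω v v') (hnull : ∀ v v', matVec (Ω v v') (v - v') = 0)
    (v v' : E3) : ⟪v', collKer Ω f v' v⟫ = -⟪v, collKer Ω f v v'⟫ := by
  have horth : ⟪v - v', collKer Ω f v v'⟫ = 0 :=
    inner_matVec_eq_zero_of_isSymm (hsymm v v') (hnull v v') _
  rw [inner_sub_left] at horth
  rw [collKer_swap hexch, inner_neg_right]
  linarith

end CollisionKernel

/-- conservation of kinetic energy by the collision operator. -/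
theorem energy_conservation
    (Ω : E3 → E3 → Matrix (Fin 3) (Fin 3) ℝ)
    (hΩ : ∀ i j, ContDiff ℝ ∞ fun p : E3 × E3 => Ω p.1 p.2 i j)
    (hexch : ∀ v v', Ω v v' = Ω v' v)
    (hsymm : ∀ v v', (Ω v v')ᵀ = Ω v v')
    (hnull : ∀ v v', matVec (Ω v v') (v - v') = 0)
    (f : E3 → ℝ) (hf : ContDiff ℝ ∞ f) (hfc : HasCompactSupport f) :
    ∫ v, ‖v‖ ^ 2 * collOp Ω f v = 0 := by
  have hK : ContDiff ℝ ∞ (uncurry (collKer Ω f)) := contDiff_collKer hΩ (by simpa using hf)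
  have hKc : HasCompactSupport (uncurry (collKer Ω f)) := hasCompactSupport_collKer hfc
  have hQc : HasCompactSupport (uncurry fun v v' => ⟪v, collKer Ω f v v'⟫) :=
    hKc.mono fun p hp h => hp (by simp only [uncurry] at h ⊢; rw [h, inner_zero_right])
  calc ∫ v, ‖v‖ ^ 2 * collOp Ω f v
      = -∫ v, fderiv ℝ (fun v => ‖v‖ ^ 2) v (∫ v', collKer Ω f v v') :=
        integral_mul_div3_eq_neg_integral_fderiv (contDiff_norm_sq ℝ)
          (contDiff_one_integral_of_hasCompactSupport (hK.of_le (by simp)) hKc)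
          (hasCompactSupport_integral hKc)
    _ = -(2 * ∫ v, ∫ v', ⟪v, collKer Ω f v v'⟫) := by
        rw [← integral_const_mul]
        congr 2 with v
        rw [fderiv_norm_sq_apply,
          integral_inner (integrable_of_hasCompactSupport_uncurry hK.continuous hKc v)]
        simp
    _ = 0 := by
        rw [integral_integral_eq_zero_of_antisymm (F := fun v v' => ⟪v, collKer Ω f v v'⟫)
          (continuous_fst.inner hK.continuous) hQc
          (inner_collKer_swap hexch hsymm hnull), mul_zero, neg_zero]
end
end

section
/- Let ω : ℝ³ × ℝ³ → ℝ^{3×3} be a smooth matrix-valued kernel and let f : ℝ³ → ℝ be smooth and compactly supported. Define the reflected function g(v) = f(−v) and the reflected kernel ω̃(v,v') = ω(−v,−v'). Then C_{ω̃}[g](v) = C_ω[f](−v) for all v ∈ ℝ³. Consequently, if ω satisfies the parity symmetry ω(−v,−v') = ω(v,v') for all v, v', then the velocity reflection of any solution of ∂f/∂t = C_ω[f] is again a solution; conversely, requiring that reflections of solutions are solutions forces the collision kernel to satisfy ω(v,v') = ω(−v,−v'). -/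
open MeasureTheory Matrix
open scoped RealInnerProductSpace ContDiff

noncomputable section

/-!
Reflecting `f` negates its gradient, so reflecting both `f` and the kernel turns the integrand
`Ω(v,v')(f(v')∇f(v) − f(v)∇f(v'))` into minus the original one at `(-v,-v')`. Since `v' ↦ -v'`
preserves Lebesgue measure, the reflected flux is `w ↦ -J(-w)` for the original flux `J`, and
the two sign changes cancel in its divergence.
-/

section Reflection

variable {𝕜 : Type*} [NontriviallyNormedField 𝕜]
  {E : Type*} [NormedAddCommGroup E] [NormedSpace 𝕜 E]
  {F : Type*} [NormedAddCommGroup F] [NormedSpace 𝕜 F]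

theorem fderiv_comp_neg (G : E → F) (v : E) :
    fderiv 𝕜 (fun w => G (-w)) v = -fderiv 𝕜 G (-v) := by
  have h := (ContinuousLinearEquiv.neg 𝕜 : E ≃L[𝕜] E).comp_right_fderiv (f := G) (x := v)
  ext u
  simpa [Function.comp_def] using congrArg (· u) h

theorem fderiv_neg_comp_neg (G : E → F) (v : E) :
    fderiv 𝕜 (fun w => -G (-w)) v = fderiv 𝕜 G (-v) := by
  rw [fderiv_fun_neg, fderiv_comp_neg, neg_neg]

end Reflection

theorem gradient_comp_neg {E : Type*} [NormedAddCommGroup E] [InnerProductSpace ℝ E]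
    [CompleteSpace E] (f : E → ℝ) (v : E) :
    gradient (fun a => f (-a)) v = -gradient f (-v) := by
  rw [gradient, fderiv_comp_neg, map_neg, gradient]

theorem matVec_neg (M : Matrix (Fin 3) (Fin 3) ℝ) (x : E3) :
    matVec M (-x) = -matVec M x := by
  simp [matVec, Matrix.mulVec_neg]

theorem div3_neg_comp_neg (F : E3 → E3) (v : E3) :
    div3 (fun w => -F (-w)) v = div3 F (-v) := by
  simp only [div3, fderiv_neg_comp_neg]

theorem collKer_reflect (Ω : E3 → E3 → Matrix (Fin 3) (Fin 3) ℝ) (f : E3 → ℝ) (v v' : E3) :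
    collKer (fun a b => Ω (-a) (-b)) (fun a => f (-a)) v v'
      = -collKer Ω f (-v) (-v') := by
  simp only [collKer, gradient_comp_neg, ← matVec_neg]
  congr 1
  module

theorem collOp_reflect (Ω : E3 → E3 → Matrix (Fin 3) (Fin 3) ℝ) (f : E3 → ℝ) (v : E3) :
    collOp (fun a b => Ω (-a) (-b)) (fun a => f (-a)) v = collOp Ω f (-v) := by
  have flux_reflect : (fun w => ∫ v', collKer (fun a b => Ω (-a) (-b)) (fun a => f (-a)) w v')
      = fun w => -∫ v', collKer Ω f (-w) v' := by
    funext w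
    simp only [collKer_reflect, integral_neg,
      integral_neg_eq_self (fun v' => collKer Ω f (-w) v') volume]
  rw [collOp, flux_reflect]
  exact div3_neg_comp_neg (fun z => ∫ v', collKer Ω f z v') v

theorem reflection_symmetry_general
    (Ω : E3 → E3 → Matrix (Fin 3) (Fin 3) ℝ)
    (f : E3 → ℝ) :
    (∀ v : E3,
        collOp (fun a b => Ω (-a) (-b)) (fun a => f (-a)) v = collOp Ω f (-v)) ∧
    ((∀ v v' : E3, Ω (-v) (-v') = Ω v v') →
      ∀ v : E3, collOp Ω (fun a => f (-a)) v = collOp Ω f (-v)) := by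
  refine ⟨collOp_reflect Ω f, fun hparity v => ?_⟩
  have hΩ : (fun a b => Ω (-a) (-b)) = Ω := funext₂ hparity
  simpa only [hΩ] using collOp_reflect Ω f v

/-- behaviour of the collision operator under velocity reflection;
the reflected kernel generates the reflected dynamics, and for parity-symmetric
kernels the reflection of a solution is again a solution. -/
theorem reflection_symmetry
    (Ω : E3 → E3 → Matrix (Fin 3) (Fin 3) ℝ)
    (hΩ : ∀ i j, ContDiff ℝ ∞ fun p : E3 × E3 => Ω p.1 p.2 i j)
    (f : E3 → ℝ) (hf : ContDiff ℝ ∞ f) (hfc : HasCompactSupport f) :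
    (∀ v : E3,
        collOp (fun a b => Ω (-a) (-b)) (fun a => f (-a)) v = collOp Ω f (-v)) ∧
    ((∀ v v' : E3, Ω (-v) (-v') = Ω v v') →
      ∀ v : E3, collOp Ω (fun a => f (-a)) v = collOp Ω f (-v)) :=
  reflection_symmetry_general Ω f
end
end

section
/- Let v, v' ∈ ℝ³ with u = v − v' ≠ 0 and u × r ≠ 0 where r = v + v', and let U ∈ O(3) be an orthogonal matrix. The CM2 collision kernel is rotationally equivariant: ω(Uv, Uv') = U ω(v,v') Uᵀ. -/
/-!
Each ingredient of the kernel transforms naturally under `x ↦ U x`: differences and sums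
commute with `U`, norms are preserved, `P_{Uu} = U P_u Uᵀ`, `(U x)(U y)ᵀ = U x yᵀ Uᵀ`, and
`(U u) × (U r) = det U • U (u × r)`. The sign `det U = ±1` is invisible in the rank-one
projector `s̃ s̃ᵀ`, and since `A ↦ U A Uᵀ` is an algebra automorphism of the matrix ring, the
kernel built from these pieces is conjugated as a whole.
-/
open Matrix
open scoped RealInnerProductSpace

noncomputable section

/-- Outer product x yᵀ of two vectors in ℝ³. -/
def outer (x y : E3) : Matrix (Fin 3) (Fin 3) ℝ :=
  Matrix.vecMulVec (fun i => x i) (fun i => y i)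

/-- Cross product on ℝ³. -/
def cross3 (x y : E3) : E3 :=
  (EuclideanSpace.equiv (Fin 3) ℝ).symm (crossProduct (fun i => x i) (fun i => y i))

/-- P = I − uuᵀ/|u|², the orthogonal projection onto the plane perpendicular to u. -/
def proj3 (u : E3) : Matrix (Fin 3) (Fin 3) ℝ :=
  1 - (‖u‖ ^ 2)⁻¹ • outer u u

/-- The CM2 collision kernel
ω(v,v') = P (g_r(|u|,|r|,|s|)² r̃ r̃ᵀ + g_s(|u|,|r|,|s|)² s̃ s̃ᵀ) P,
where u = v − v', r = v + v', s = u × r, P = I − uuᵀ/|u|²,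
r̃ = Pr/|Pr| and s̃ = s/|s|. -/
def cm2 (gr gs : ℝ → ℝ → ℝ → ℝ) (v v' : E3) : Matrix (Fin 3) (Fin 3) ℝ :=
  let u : E3 := v - v'
  let r : E3 := v + v'
  let s : E3 := cross3 u r
  let P : Matrix (Fin 3) (Fin 3) ℝ := proj3 u
  let rt : E3 := ‖matVec P r‖⁻¹ • matVec P r
  let st : E3 := ‖s‖⁻¹ • s
  P * ((gr ‖u‖ ‖r‖ ‖s‖) ^ 2 • outer rt rt + (gs ‖u‖ ‖r‖ ‖s‖) ^ 2 • outer st st) * P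

theorem Matrix.mul_vecMulVec_mul_transpose {R m n : Type*} [CommSemiring R] [Fintype m]
    [Fintype n] (A B : Matrix m n R) (x y : n → R) :
    A * vecMulVec x y * Bᵀ = vecMulVec (A *ᵥ x) (B *ᵥ y) := by
  rw [mul_vecMulVec, vecMulVec_mul, vecMul_transpose]

/-- The cofactor identity `(M x) × (M y) = cof(M) (x × y)` with `Mᵀ cof(M) = det M • 1`. -/
theorem Matrix.transpose_mulVec_cross_mulVec {R : Type*} [CommRing R]
    (M : Matrix (Fin 3) (Fin 3) R) (x y : Fin 3 → R) :
    Mᵀ *ᵥ ((M *ᵥ x) ⨯₃ (M *ᵥ y)) = M.det • (x ⨯₃ y) := by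
  ext i
  fin_cases i <;>
    simp only [mulVec, dotProduct, Fin.zero_eta, Fin.mk_one, Fin.reduceFinMk, Fin.isValue,
      transpose_apply, cross_apply, Fin.sum_univ_three, cons_val_zero, cons_val_one, cons_val,
      det_fin_three, Pi.smul_apply, smul_eq_mul] <;>
    ring

theorem Matrix.mulVec_cross_mulVec_of_mul_transpose_eq_one {R : Type*} [CommRing R]
    {U : Matrix (Fin 3) (Fin 3) R} (hU : U * Uᵀ = 1) (x y : Fin 3 → R) :
    (U *ᵥ x) ⨯₃ (U *ᵥ y) = U.det • U *ᵥ (x ⨯₃ y) := by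
  rw [← mulVec_smul, ← transpose_mulVec_cross_mulVec, mulVec_mulVec, hU, one_mulVec]

lemma matVec_eq_toEuclideanCLM (M : Matrix (Fin 3) (Fin 3) ℝ) (x : E3) :
    matVec M x = toEuclideanCLM (𝕜 := ℝ) M x := rfl

lemma matVec_add (M : Matrix (Fin 3) (Fin 3) ℝ) (x y : E3) :
    matVec M (x + y) = matVec M x + matVec M y :=
  map_add (toEuclideanCLM (𝕜 := ℝ) M) x y

lemma matVec_sub (M : Matrix (Fin 3) (Fin 3) ℝ) (x y : E3) :
    matVec M (x - y) = matVec M x - matVec M y :=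
  map_sub (toEuclideanCLM (𝕜 := ℝ) M) x y

lemma matVec_smul (M : Matrix (Fin 3) (Fin 3) ℝ) (c : ℝ) (x : E3) :
    matVec M (c • x) = c • matVec M x :=
  map_smul (toEuclideanCLM (𝕜 := ℝ) M) c x

lemma matVec_mul (A B : Matrix (Fin 3) (Fin 3) ℝ) (x : E3) :
    matVec (A * B) x = matVec A (matVec B x) := by
  simp only [matVec_eq_toEuclideanCLM, map_mul]
  rfl

lemma matVec_one (x : E3) : matVec 1 x = x := by
  simp only [matVec_eq_toEuclideanCLM, map_one]
  rfl

lemma norm_matVec {U : Matrix (Fin 3) (Fin 3) ℝ} (hU : U ∈ orthogonalGroup (Fin 3) ℝ) (x : E3) :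
    ‖matVec U x‖ = ‖x‖ := by
  have hU' := Unitary.map_mem (toEuclideanCLM (𝕜 := ℝ) (n := Fin 3)) hU
  exact ContinuousLinearMap.norm_map_of_mem_unitary hU' x

lemma outer_matVec (M : Matrix (Fin 3) (Fin 3) ℝ) (x y : E3) :
    outer (matVec M x) (matVec M y) = M * outer x y * Mᵀ :=
  (mul_vecMulVec_mul_transpose M M _ _).symm

lemma outer_smul_smul (c d : ℝ) (x y : E3) : outer (c • x) (d • y) = (c * d) • outer x y := by
  ext i j
  simp only [outer, vecMulVec_apply, PiLp.smul_apply, smul_eq_mul, Matrix.smul_apply]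
  ring

lemma cross3_matVec {U : Matrix (Fin 3) (Fin 3) ℝ} (hU : U ∈ orthogonalGroup (Fin 3) ℝ)
    (x y : E3) : cross3 (matVec U x) (matVec U y) = U.det • matVec U (cross3 x y) :=
  congrArg (WithLp.toLp 2) (mulVec_cross_mulVec_of_mul_transpose_eq_one
    ((mem_orthogonalGroup_iff _ _).mp hU) _ _)

lemma proj3_matVec {U : Matrix (Fin 3) (Fin 3) ℝ} (hU : U ∈ orthogonalGroup (Fin 3) ℝ) (u : E3) :
    proj3 (matVec U u) = U * proj3 u * Uᵀ := by
  rw [proj3, proj3, norm_matVec hU, outer_matVec, Matrix.mul_sub, Matrix.sub_mul, Matrix.mul_one,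
    (mem_orthogonalGroup_iff _ _).mp hU, Matrix.mul_smul, Matrix.smul_mul]

lemma matVec_conj_matVec {U : Matrix (Fin 3) (Fin 3) ℝ} (hU : U ∈ orthogonalGroup (Fin 3) ℝ)
    (A : Matrix (Fin 3) (Fin 3) ℝ) (x : E3) :
    matVec (U * A * Uᵀ) (matVec U x) = matVec U (matVec A x) := by
  rw [matVec_mul, matVec_mul, ← matVec_mul Uᵀ, (mem_orthogonalGroup_iff' _ _).mp hU, matVec_one]

lemma outer_normalize_smul {c : ℝ} (hc : c ≠ 0) (x : E3) :
    outer (‖c • x‖⁻¹ • c • x) (‖c • x‖⁻¹ • c • x) = outer (‖x‖⁻¹ • x) (‖x‖⁻¹ • x) := by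
  rw [smul_smul, outer_smul_smul, outer_smul_smul, norm_smul, Real.norm_eq_abs]
  congr 1
  field_simp
  rw [sq_abs]

theorem cm2_rotational_equivariance_general (gr gs : ℝ → ℝ → ℝ → ℝ) (v v' : E3)
    (U : Matrix (Fin 3) (Fin 3) ℝ) (hU : U ∈ Matrix.orthogonalGroup (Fin 3) ℝ) :
    cm2 gr gs (matVec U v) (matVec U v') = U * cm2 gr gs v v' * Uᵀ := by
  have hdet : ‖U.det‖ = 1 := CStarRing.norm_of_mem_unitary (det_of_mem_unitary hU)
  have hdet_ne : U.det ≠ 0 := norm_ne_zero_iff.mp (hdet ▸ one_ne_zero)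
  let φ := Unitary.conjStarAlgAut ℝ (Matrix (Fin 3) (Fin 3) ℝ) ⟨U, hU⟩
  have hφ (A : Matrix (Fin 3) (Fin 3) ℝ) : U * A * Uᵀ = φ A := by
    simp only [φ, Unitary.conjStarAlgAut_apply, star_eq_conjTranspose,
      conjTranspose_eq_transpose_of_trivial]
  simp only [cm2, ← matVec_sub, ← matVec_add, cross3_matVec hU, proj3_matVec hU,
    matVec_conj_matVec hU]
  rw [outer_normalize_smul hdet_ne]
  simp only [norm_smul, hdet, one_mul, norm_matVec hU, ← matVec_smul, outer_matVec, hφ,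
    ← map_smul, ← map_add, ← map_mul]

/-- rotational equivariance of the CM2 collision kernel. -/
theorem cm2_rotational_equivariance (gr gs : ℝ → ℝ → ℝ → ℝ) (v v' : E3)
    (hu : v - v' ≠ 0) (hs : cross3 (v - v') (v + v') ≠ 0)
    (U : Matrix (Fin 3) (Fin 3) ℝ) (hU : U ∈ Matrix.orthogonalGroup (Fin 3) ℝ) :
    cm2 gr gs (matVec U v) (matVec U v') = U * cm2 gr gs v v' * Uᵀ :=
  cm2_rotational_equivariance_general gr gs v v' U hU
end
end
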